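/- Let ω_{AC} be a state on A_AC admitting a decomposition ω_{AC} = Σ_{i=1}^n λ_i ω_{AC,i} with λ_i ∈ (0,1), Σλ_i = 1, where each ω_{AC,i} is a product state for the Jordan–Wigner pair (A_A, Ã_C^{AC}) with Ã_C^{AC} := the algebra generated by A_C^+ and v_A A_C^−. Let ω_{B,i} be even states on A_B and let ω_ABC := Σ_i λ_i (ω_{AC,i} ∘ ω_{B,i}) where ω_{AC,i} ∘ ω_{B,i} is the product state extension to A_Z of ω_{AC,i} and ω_{B,i}. Then each ω_{AC,i} ∘ ω_{B,i} restricted to the algebra generated by A_A and Ã_C := {A_C^+, v_AB A_C^−} is a product state for the pair (A_A, Ã_C); consequently ω_ABC restricts to a separable state for (A_A, Ã_C). -/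
import Mathlib


open scoped ComplexOrder

/-- The full matrix algebra `M_N(ℂ)`, our model of a finite-dimensional factor. -/
abbrev Mat (N : ℕ) := Matrix (Fin N) (Fin N) ℂ

variable {N : ℕ}

/-- The tracial state `τ` on `Mat N`. -/
noncomputable def tau (x : Mat N) : ℂ := x.trace / N

/-- Matrix logarithm via the continuous functional calculus. -/
noncomputable def mlog (x : Mat N) : Mat N := cfc Real.log x

/-- Matrix square root via the continuous functional calculus. -/
noncomputable def msqrt (x : Mat N) : Mat N := cfc Real.sqrt x

/-- Matrix inverse square root via the continuous functional calculus. -/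
noncomputable def misqrt (x : Mat N) : Mat N := cfc (fun t : ℝ => (Real.sqrt t)⁻¹) x

/-- The entropy `Ŝ(ψ) = -ψ(log ρ_ψ) = -τ(ρ log ρ)` of the state with τ-density `ρ`. -/
noncomputable def Shat (ρ : Mat N) : ℝ := -(tau (ρ * mlog ρ)).re

/-- The von Neumann entropy `S(ψ|_B) = -Tr_B(D log D) = Ŝ(ψ|_B) + log k` of the
restriction of a state to a subfactor `B ≅ M_k`, expressed through the τ-density `ρ`
of the restriction and the matrix size `k` of the subfactor. -/
noncomputable def Sres (ρ : Mat N) (k : ℕ) : ℝ := Shat ρ + Real.log k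

/-- `ρ` is the density with respect to the tracial state `τ` of a state of `Mat N`. -/
def IsTauDensity (ρ : Mat N) : Prop := ρ.PosSemidef ∧ tau ρ = 1

/-- `E` is the τ-preserving conditional expectation onto the unital *-subalgebra `B`:
it maps into `B`, fixes `B` pointwise, and `Tr(b x) = Tr(b (E x))` for all `b ∈ B`.
These properties determine `E` uniquely. -/
def IsCondExp (B : StarSubalgebra ℂ (Mat N)) (E : Mat N →ₗ[ℂ] Mat N) : Prop :=
  (∀ x, E x ∈ B) ∧ (∀ b ∈ B, E b = b) ∧
    (∀ x : Mat N, ∀ b ∈ B, (b * x).trace = (b * E x).trace)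

/-- `B` is a subfactor: its relative center is trivial (so `B` is a full matrix algebra). -/
def IsFactorSub (B : StarSubalgebra ℂ (Mat N)) : Prop :=
  ∀ x ∈ B, (∀ y ∈ B, x * y = y * x) → ∃ c : ℂ, x = c • (1 : Mat N)

/-- The commuting square condition: `B = AB ⊓ BC` and `E_AB ∘ E_BC = E_BC ∘ E_AB = E_B`. -/
def CommSquare (AB BC B : StarSubalgebra ℂ (Mat N))
    (EAB EBC EB : Mat N →ₗ[ℂ] Mat N) : Prop :=
  IsCondExp AB EAB ∧ IsCondExp BC EBC ∧ IsCondExp B EB ∧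
    B = AB ⊓ BC ∧ (∀ x, EAB (EBC x) = EB x) ∧ (∀ x, EBC (EAB x) = EB x)

open Classical in
/-- Relative entropy `H(ρ₁, ρ₂) = τ(ρ₁ (log ρ₁ - log ρ₂))` of two τ-densities, equal to `+∞`
unless the support of `ρ₁` is dominated by the support of `ρ₂` (for positive semidefinite
matrices the support condition is the inclusion of kernels `ker ρ₂ ⊆ ker ρ₁`). -/
noncomputable def relEnt (ρ₁ ρ₂ : Mat N) : EReal :=
  if ∀ v : Fin N → ℂ, ρ₂.mulVec v = 0 → ρ₁.mulVec v = 0 then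
    (((tau (ρ₁ * (mlog ρ₁ - mlog ρ₂))).re : ℝ) : EReal)
  else ⊤

/-- Complete positivity of a linear map on `Mat N`. -/
def IsCP (E : Mat N →ₗ[ℂ] Mat N) : Prop :=
  ∀ (k : ℕ) (x a : Fin k → Mat N),
    (∑ i, ∑ j, star (a i) * E (star (x i) * x j) * a j).PosSemidef

/-- `p` is a minimal projection of the subalgebra `B`. -/
def IsMinProj (B : StarSubalgebra ℂ (Mat N)) (p : Mat N) : Prop :=
  p ∈ B ∧ p.IsHermitian ∧ p * p = p ∧ p ≠ 0 ∧
    ∀ q ∈ B, q.IsHermitian → q * q = q → q * p = q → q = 0 ∨ q = p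

/-- The subfactor `B` of `Mat N` has matrix size `k` (i.e. `B ≅ M_k`) in the sense that its
minimal projections have ambient matrix trace `N / k`; this encodes the assumption that the
ambient matrix trace restricts on `B` to `N/k` times the canonical matrix trace of `B`. -/
def HasMatSize (B : StarSubalgebra ℂ (Mat N)) (k : ℕ) : Prop :=
  ∀ p, IsMinProj B p → Matrix.trace p = ((N : ℂ) / k)

/-- `Θ` is a grading: an involutive *-automorphism. -/
def IsGrading (Θ : Mat N ≃⋆ₐ[ℂ] Mat N) : Prop := ∀ x, Θ (Θ x) = x

/-- The subalgebra `A` is invariant under the grading. -/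
def ThetaInvariant (Θ : Mat N ≃⋆ₐ[ℂ] Mat N) (A : StarSubalgebra ℂ (Mat N)) : Prop :=
  ∀ x ∈ A, Θ x ∈ A

/-- Graded commutation relations between (the subalgebras of) two disjoint regions:
even elements of one commute with all elements of the other, odd elements anticommute. -/
def GradedComm (Θ : Mat N ≃⋆ₐ[ℂ] Mat N) (A C : StarSubalgebra ℂ (Mat N)) : Prop :=
  ∀ x ∈ A, ∀ y ∈ C,
    ((Θ x = x ∨ Θ y = y) → x * y = y * x) ∧
      (Θ x = -x → Θ y = -y → x * y + y * x = 0)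

/-- `ω` is a state (positive normalized linear functional). -/
def IsState (ω : Mat N →ₗ[ℂ] ℂ) : Prop :=
  ω 1 = 1 ∧ ∀ x : Mat N, 0 ≤ ω (star x * x)

/-- Markov property of the state `ω` with respect to a triplet with first algebra `AA` and
pair algebra `AB`: there is a quasi-conditional expectation (a completely positive map into
`AB` which is a module map over `AA`) fixing `AA` pointwise and preserving `ω`. -/
def IsMarkovState (AA AB : StarSubalgebra ℂ (Mat N)) (ω : Mat N →ₗ[ℂ] ℂ) : Prop :=
  ∃ E : Mat N →ₗ[ℂ] Mat N, IsCP E ∧ (∀ x, E x ∈ AB) ∧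
    (∀ c ∈ AA, ∀ x, E (c * x) = c * E x) ∧ (∀ c ∈ AA, E c = c) ∧
    ∀ x, ω (E x) = ω x

/-- Markov property, formulated for the state with τ-density `ρ`. -/
def IsMarkovDensity (AA AB : StarSubalgebra ℂ (Mat N)) (ρ : Mat N) : Prop :=
  ∃ E : Mat N →ₗ[ℂ] Mat N, IsCP E ∧ (∀ x, E x ∈ AB) ∧
    (∀ c ∈ AA, ∀ x, E (c * x) = c * E x) ∧ (∀ c ∈ AA, E c = c) ∧
    ∀ x, tau (ρ * E x) = tau (ρ * x)

/-- The restriction of `ω` to the subalgebra generated by `AA` and `AC` is separable: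
a convex combination of product states for the pair `(AA, AC)`. -/
def SeparableOn (AA AC : StarSubalgebra ℂ (Mat N)) (ω : Mat N →ₗ[ℂ] ℂ) : Prop :=
  ∃ (n : ℕ) (lam : Fin n → ℝ) (ωi : Fin n → (Mat N →ₗ[ℂ] ℂ)),
    (∀ i, 0 ≤ lam i) ∧ (∑ i, lam i = 1) ∧ (∀ i, IsState (ωi i)) ∧
    (∀ i, ∀ x ∈ AA, ∀ y ∈ AC, ωi i (x * y) = ωi i x * ωi i y) ∧
    ∀ z ∈ (AA ⊔ AC : StarSubalgebra ℂ (Mat N)), ω z = ∑ i, (lam i : ℂ) * ωi i z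

/-- The conditional expectation `E` is sufficient for the pair of states with τ-densities
`ρ₁, ρ₂`: some completely positive trace-preserving (recovery) map `T` recovers the densities
from their compressions `E ρ₁`, `E ρ₂` (recall that the τ-density of `ψ ∘ E` is `E ρ_ψ`). -/
def IsSufficient (E : Mat N →ₗ[ℂ] Mat N) (ρ₁ ρ₂ : Mat N) : Prop :=
  ∃ T : Mat N →ₗ[ℂ] Mat N, IsCP T ∧ (∀ x, (T x).trace = x.trace) ∧
    T (E ρ₁) = ρ₁ ∧ T (E ρ₂) = ρ₂

/-- The Jordan–Wigner transform of a region algebra: the subalgebra generated by the even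
part of `C` together with `v` times the odd part of `C`. -/
noncomputable def jwAlg {N : ℕ} (Θ : Mat N ≃⋆ₐ[ℂ] Mat N) (v : Mat N)
    (C : StarSubalgebra ℂ (Mat N)) : StarSubalgebra ℂ (Mat N) :=
  StarAlgebra.adjoin ℂ
    ({x : Mat N | x ∈ C ∧ Θ x = x} ∪ (fun y => v * y) '' {y : Mat N | y ∈ C ∧ Θ y = -y})

/-- let `ω_{AC,i}` be states on `A_AC` which are product states for the
Jordan–Wigner pair `(S_A, Ã_C^{AC})` with `Ã_C^{AC} = jwAlg Θ v_A S_C`, let `ω_{B,i}` be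
even states on `S_B`, and let `ω_i = ω_{AC,i} ∘ ω_{B,i}` be the product state extensions
(characterized by `ω_i(x b) = ω_{AC,i}(x) ω_{B,i}(b)` for `x ∈ A_AC`, `b ∈ S_B`).  Then each
`ω_i` is a product state for the pair `(S_A, Ã_C)` with `Ã_C = jwAlg Θ (v_A v_B) S_C`, and
consequently `ω_ABC = Σ λ_i ω_i` restricts to a separable state for `(S_A, Ã_C)`. -/
theorem stmt17 {N : ℕ} (hN : 0 < N)
    (Θ : Mat N ≃⋆ₐ[ℂ] Mat N) (hΘ : IsGrading Θ)
    (SA SB SC : StarSubalgebra ℂ (Mat N))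
    (hAinv : ThetaInvariant Θ SA) (hBinv : ThetaInvariant Θ SB) (hCinv : ThetaInvariant Θ SC)
    (hfA : IsFactorSub SA) (hfB : IsFactorSub SB) (hfC : IsFactorSub SC)
    (hABc : GradedComm Θ SA SB) (hACc : GradedComm Θ SA SC) (hBCc : GradedComm Θ SB SC)
    (hgen : SA ⊔ SB ⊔ SC = ⊤)
    (vA vB : Mat N) (hvA : vA ∈ SA) (hvB : vB ∈ SB)
    (hvAe : Θ vA = vA) (hvBe : Θ vB = vB)
    (hvAu : star vA * vA = 1 ∧ vA * star vA = 1)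
    (hvBu : star vB * vB = 1 ∧ vB * star vB = 1)
    (hvAim : ∀ x ∈ SA, star vA * x * vA = Θ x)
    (hvBim : ∀ x ∈ SB, star vB * x * vB = Θ x)
    (n : ℕ) (lam : Fin n → ℝ)
    (hlam : ∀ i, 0 < lam i ∧ lam i < 1) (hsum : ∑ i, lam i = 1)
    (ωAC ωB ωi : Fin n → (Mat N →ₗ[ℂ] ℂ))
    (hstAC : ∀ i, IsState (ωAC i)) (hstB : ∀ i, IsState (ωB i))
    (hsti : ∀ i, IsState (ωi i))
    (hBeven : ∀ i x, ωB i (Θ x) = ωB i x)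
    (hACprod : ∀ i, ∀ x ∈ SA, ∀ y ∈ jwAlg Θ vA SC, ωAC i (x * y) = ωAC i x * ωAC i y)
    (hext : ∀ i, ∀ x ∈ (SA ⊔ SC : StarSubalgebra ℂ (Mat N)), ∀ b ∈ SB,
      ωi i (x * b) = ωAC i x * ωB i b) :
    (∀ i, ∀ x ∈ SA, ∀ y ∈ jwAlg Θ (vA * vB) SC, ωi i (x * y) = ωi i x * ωi i y) ∧
      SeparableOn SA (jwAlg Θ (vA * vB) SC) (∑ i, (lam i : ℂ) • ωi i) := by
  classical
  -- Abbreviations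
  set W : StarSubalgebra ℂ (Mat N) := jwAlg Θ vA SC with hW
  set E : Submonoid (Mat N) := Submonoid.closure ({vB, star vB} : Set (Mat N)) with hE
  -- elements of E lie in SB
  have hE_SB : ∀ b ∈ E, b ∈ SB := by
    intro b hb
    induction hb using Submonoid.closure_induction with
    | mem x hx => rcases hx with rfl | rfl
                  · exact hvB
                  · exact star_mem hvB
    | one => exact one_mem SB
    | mul x y _ _ hx hy => exact mul_mem hx hy
  -- elements of E are even
  have hE_even : ∀ b ∈ E, Θ b = b := by
    intro b hb
    induction hb using Submonoid.closure_induction with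
    | mem x hx => rcases hx with rfl | rfl
                  · exact hvBe
                  · rw [map_star, hvBe]
    | one => exact map_one Θ
    | mul x y _ _ hx hy => rw [map_mul, hx, hy]
  -- E is star-closed
  have hE_star : ∀ b ∈ E, star b ∈ E := by
    intro b hb
    induction hb using Submonoid.closure_induction with
    | mem x hx => rcases hx with rfl | rfl
                  · exact Submonoid.subset_closure (Or.inr rfl)
                  · rw [star_star]
                    exact Submonoid.subset_closure (Or.inl rfl)
    | one => simpa using one_mem E
    | mul x y _ _ hx hy => rw [star_mul]; exact mul_mem hy hx
  -- W is contained in SA ⊔ SC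
  have hW_sub : W ≤ SA ⊔ SC := by
    rw [hW, jwAlg]
    apply StarAlgebra.adjoin_le
    rintro z (⟨hzC, _⟩ | ⟨y, ⟨hyC, _⟩, rfl⟩)
    · exact le_sup_right (α := StarSubalgebra ℂ (Mat N)) hzC
    · exact mul_mem (le_sup_left (α := StarSubalgebra ℂ (Mat N)) hvA)
        (le_sup_right (α := StarSubalgebra ℂ (Mat N)) hyC)
  -- an even element of SB commutes with everything in SA ⊔ SC
  have hcomm : ∀ b ∈ SB, Θ b = b → ∀ z ∈ (SA ⊔ SC : StarSubalgebra ℂ (Mat N)),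
      b * z = z * b := by
    intro b hb hbe
    have hbe' : Θ (star b) = star b := by rw [map_star, hbe]
    -- the star-commutant of b
    let Scomm : StarSubalgebra ℂ (Mat N) :=
      { carrier := {x | b * x = x * b ∧ star b * x = x * star b}
        mul_mem' := by
          rintro x y ⟨hx1, hx2⟩ ⟨hy1, hy2⟩
          constructor
          · rw [← mul_assoc, hx1, mul_assoc, hy1, mul_assoc]
          · rw [← mul_assoc, hx2, mul_assoc, hy2, mul_assoc]
        add_mem' := by
          rintro x y ⟨hx1, hx2⟩ ⟨hy1, hy2⟩
          constructor
          · rw [mul_add, add_mul, hx1, hy1]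
          · rw [mul_add, add_mul, hx2, hy2]
        algebraMap_mem' := by
          intro r
          constructor <;> simp [Algebra.commutes]
        star_mem' := by
          rintro x ⟨hx1, hx2⟩
          constructor
          · calc b * star x = star (x * star b) := by simp [star_mul]
              _ = star (star b * x) := by rw [hx2]
              _ = star x * b := by simp [star_mul]
          · calc star b * star x = star (x * b) := by simp [star_mul]
              _ = star (b * x) := by rw [hx1]
              _ = star x * star b := by simp [star_mul] }
    have hA : SA ≤ Scomm := by
      intro x hx
      constructor
      · exact ((hABc x hx b hb).1 (Or.inr hbe)).symm
      · exact ((hABc x hx (star b) (star_mem hb)).1 (Or.inr hbe')).symm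
    have hC : SC ≤ Scomm := by
      intro y hy
      constructor
      · exact (hBCc b hb y hy).1 (Or.inl hbe)
      · exact (hBCc (star b) (star_mem hb) y hy).1 (Or.inl hbe')
    intro z hz
    exact ((sup_le hA hC) hz).1
  -- the set of "monomials" b * w
  set T : Set (Mat N) := {z | ∃ b ∈ E, ∃ w ∈ W, z = b * w} with hT
  have hT1 : (1 : Mat N) ∈ T := ⟨1, one_mem E, 1, one_mem W, (one_mul 1).symm⟩
  have hTmul : ∀ z₁ ∈ T, ∀ z₂ ∈ T, z₁ * z₂ ∈ T := by
    rintro _ ⟨b, hb, w, hw, rfl⟩ _ ⟨b', hb', w', hw', rfl⟩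
    refine ⟨b * b', mul_mem hb hb', w * w', mul_mem hw hw', ?_⟩
    have : w * b' = b' * w :=
      (hcomm b' (hE_SB b' hb') (hE_even b' hb') w (hW_sub hw)).symm
    rw [mul_assoc, ← mul_assoc w, this, mul_assoc, mul_assoc]
  have hTstar : ∀ z ∈ T, star z ∈ T := by
    rintro _ ⟨b, hb, w, hw, rfl⟩
    refine ⟨star b, hE_star b hb, star w, star_mem hw, ?_⟩
    rw [star_mul]
    exact (hcomm (star b) (hE_SB _ (hE_star b hb))
      (by rw [map_star, hE_even b hb]) (star w) (hW_sub (star_mem hw))).symm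
  -- the span of T is a star subalgebra
  let S : StarSubalgebra ℂ (Mat N) :=
    { carrier := (Submodule.span ℂ T : Submodule ℂ (Mat N))
      mul_mem' := by
        intro x y hx hy
        have hx' : x ∈ Submodule.span ℂ T := hx
        have hy' : y ∈ Submodule.span ℂ T := hy
        show x * y ∈ Submodule.span ℂ T
        clear hx hy
        induction hy' using Submodule.span_induction with
        | mem a ha =>
          induction hx' using Submodule.span_induction with
          | mem u hu => exact Submodule.subset_span (hTmul u hu a ha)
          | zero => rw [zero_mul]; exact Submodule.zero_mem _
          | add u v _ _ hux hvx => rw [add_mul]; exact Submodule.add_mem _ hux hvx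
          | smul c u _ hux => rw [smul_mul_assoc]; exact Submodule.smul_mem _ _ hux
        | zero => rw [mul_zero]; exact Submodule.zero_mem _
        | add a b _ _ hax hbx => rw [mul_add]; exact Submodule.add_mem _ hax hbx
        | smul c a _ hax => rw [mul_smul_comm]; exact Submodule.smul_mem _ _ hax
      one_mem' := Submodule.subset_span hT1
      add_mem' := fun hx hy => Submodule.add_mem _ hx hy
      algebraMap_mem' := by
        intro r
        show (algebraMap ℂ (Mat N)) r ∈ Submodule.span ℂ T
        rw [Algebra.algebraMap_eq_smul_one]
        exact Submodule.smul_mem _ _ (Submodule.subset_span hT1)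
      star_mem' := by
        intro x hx
        have hx' : x ∈ Submodule.span ℂ T := hx
        show star x ∈ Submodule.span ℂ T
        clear hx
        induction hx' using Submodule.span_induction with
        | mem a ha => exact Submodule.subset_span (hTstar a ha)
        | zero => rw [star_zero]; exact Submodule.zero_mem _
        | add a b _ _ hax hbx => rw [star_add]; exact Submodule.add_mem _ hax hbx
        | smul c a _ hax => rw [star_smul]; exact Submodule.smul_mem _ _ hax }
  -- the target JW algebra is contained in S
  have hJW_le : jwAlg Θ (vA * vB) SC ≤ S := by
    rw [jwAlg]
    apply StarAlgebra.adjoin_le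
    rintro z (⟨hzC, hze⟩ | ⟨y, ⟨hyC, hyo⟩, rfl⟩)
    · -- even element of SC: 1 * z
      have hzW : z ∈ W := by
        rw [hW, jwAlg]
        exact StarAlgebra.subset_adjoin ℂ _ (Or.inl ⟨hzC, hze⟩)
      exact Submodule.subset_span ⟨1, one_mem E, z, hzW, (one_mul z).symm⟩
    · -- (vA * vB) * y = vB * (vA * y)
      have hvAyW : vA * y ∈ W := by
        rw [hW, jwAlg]
        exact StarAlgebra.subset_adjoin ℂ _ (Or.inr ⟨y, ⟨hyC, hyo⟩, rfl⟩)
      have hvBE : vB ∈ E := Submonoid.subset_closure (Or.inl rfl)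
      have hcommAB : vA * vB = vB * vA := (hABc vA hvA vB hvB).1 (Or.inl hvAe)
      refine Submodule.subset_span ⟨vB, hvBE, vA * y, hvAyW, ?_⟩
      show vA * vB * y = vB * (vA * y)
      rw [hcommAB, mul_assoc]
  -- ωi i x = ωAC i x for x ∈ SA
  have hωx : ∀ i, ∀ x ∈ SA, ωi i x = ωAC i x := by
    intro i x hx
    have := hext i x (le_sup_left (α := StarSubalgebra ℂ (Mat N)) hx) 1 (one_mem SB)
    rw [mul_one, (hstB i).1, mul_one] at this
    exact this
  -- the main product property
  have hprod : ∀ i, ∀ x ∈ SA, ∀ y ∈ jwAlg Θ (vA * vB) SC,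
      ωi i (x * y) = ωi i x * ωi i y := by
    intro i x hx y hy
    have hyS : y ∈ Submodule.span ℂ T := hJW_le hy
    clear hy
    induction hyS using Submodule.span_induction with
    | mem z hz =>
      obtain ⟨b, hb, w, hw, rfl⟩ := hz
      have hbSB : b ∈ SB := hE_SB b hb
      have hbe : Θ b = b := hE_even b hb
      have hwAC : w ∈ (SA ⊔ SC : StarSubalgebra ℂ (Mat N)) := hW_sub hw
      have hxAC : x ∈ (SA ⊔ SC : StarSubalgebra ℂ (Mat N)) :=
        le_sup_left (α := StarSubalgebra ℂ (Mat N)) hx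
      have hbw : b * w = w * b := hcomm b hbSB hbe w hwAC
      have h1 : x * (b * w) = (x * w) * b := by
        rw [hbw, ← mul_assoc]
      have h2 : ωi i ((x * w) * b) = ωAC i (x * w) * ωB i b :=
        hext i (x * w) (mul_mem hxAC hwAC) b hbSB
      have h3 : ωAC i (x * w) = ωAC i x * ωAC i w := hACprod i x hx w hw
      have h4 : ωi i (b * w) = ωAC i w * ωB i b := by
        rw [hbw]; exact hext i w hwAC b hbSB
      rw [h1, h2, h3, h4, hωx i x hx]
      ring
    | zero => simp
    | add a b _ _ ha hb =>
      rw [mul_add, map_add, ha, hb, map_add, mul_add]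
    | smul c a _ ha =>
      rw [mul_smul_comm, map_smul, map_smul, ha, smul_eq_mul, smul_eq_mul]
      ring
  refine ⟨hprod, n, lam, ωi, fun i => (hlam i).1.le, hsum, hsti, hprod, ?_⟩
  intro z _
  simp [LinearMap.sum_apply, LinearMap.smul_apply, smul_eq_mul]
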